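/- arXiv:2310.02423 — 3 statements merged into one kernel-verified Lean document; each statement's English description precedes it below -/
import Mathlib

section
/- Let n > 1, let g and f_1,...,f_n be differentiable functions of θ, and set S = ∑_i f_i, L = (1/2)(g + S)^2. Define L_i' := (g')·(g + n f_i) (treating f_i as constant) and L_{i,j}' := n(g + (n-1) f_i + f_j)·f_j' (treating g and f_i as constants). Then L' = (1/n) ∑_{i=1}^n (g + n f_i) g' + (1/(n(n-1))) ∑_{i ≠ j} n (g + (n-1) f_i + f_j) f_j'. -/
/-- Stochastic-loss identity (Appendix E): the derivative of `L = ½(g + ∑ᵢ fᵢ)²` equals the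
uniform average over `i` of the gradient of `½(g + n fᵢ_blocked)²` plus the uniform average
over ordered pairs `i ≠ j` of the gradient of `(n/2)(g_blocked + (n-1) fᵢ_blocked + fⱼ)²`. -/
theorem stmt_6 {n : ℕ} (hn : 1 < n) (g : ℝ → ℝ) (f : Fin n → ℝ → ℝ)
    (hg : Differentiable ℝ g) (hf : ∀ i, Differentiable ℝ (f i)) (θ : ℝ) :
    deriv (fun t => (1 / 2) * (g t + ∑ i, f i t) ^ 2) θ =
      (1 / (n : ℝ)) * ∑ i, (g θ + (n : ℝ) * f i θ) * deriv g θ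
      + (1 / ((n : ℝ) * ((n : ℝ) - 1))) *
          ∑ ij ∈ Finset.univ.filter (fun ij : Fin n × Fin n => ij.1 ≠ ij.2),
            (n : ℝ) * (g θ + ((n : ℝ) - 1) * f ij.1 θ + f ij.2 θ) * deriv (f ij.2) θ := by
  have hS : HasDerivAt (fun t => g t + ∑ i, f i t)
      (deriv g θ + ∑ i, deriv (f i) θ) θ :=
    (hg θ).hasDerivAt.add (HasDerivAt.fun_sum fun i _ => (hf i θ).hasDerivAt)
  have hL : HasDerivAt (fun t => (1 / 2 : ℝ) * (g t + ∑ i, f i t) ^ 2)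
      ((1 / 2 : ℝ) * (2 * (g θ + ∑ i, f i θ) ^ 1 * (deriv g θ + ∑ i, deriv (f i) θ))) θ :=
    (hS.pow 2).const_mul _
  rw [hL.deriv]
  have hn1 : (1 : ℝ) < (n : ℝ) := by exact_mod_cast hn
  have hn0 : (n : ℝ) ≠ 0 := by linarith
  have hnm1 : (n : ℝ) - 1 ≠ 0 := by linarith
  set G := g θ
  set G' := deriv g θ
  set S := ∑ i, f i θ with hSdef
  set D := ∑ i, deriv (f i) θ with hDdef
  have h1 : ∑ i, (G + (n : ℝ) * f i θ) * G' = ((n : ℝ) * G + (n : ℝ) * S) * G' := by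
    rw [← Finset.sum_mul]
    congr 1
    rw [Finset.sum_add_distrib, Finset.sum_const, Finset.card_univ, Fintype.card_fin,
      ← Finset.mul_sum, nsmul_eq_mul]
  have h2 : ∑ ij ∈ Finset.univ.filter (fun ij : Fin n × Fin n => ij.1 ≠ ij.2),
      (n : ℝ) * (G + ((n : ℝ) - 1) * f ij.1 θ + f ij.2 θ) * deriv (f ij.2) θ
      = (n : ℝ) * ((n : ℝ) - 1) * ((G + S) * D) := by
    rw [Finset.sum_filter, Fintype.sum_prod_type]
    have key : ∀ i : Fin n,
        (∑ j, if i ≠ j then (n : ℝ) * (G + ((n : ℝ) - 1) * f i θ + f j θ) * deriv (f j) θ else 0)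
        = (∑ j, (n : ℝ) * (G + ((n : ℝ) - 1) * f i θ + f j θ) * deriv (f j) θ)
          - (n : ℝ) * (G + ((n : ℝ) - 1) * f i θ + f i θ) * deriv (f i) θ := by
      intro i
      have : ∀ j : Fin n,
          (if i ≠ j then (n : ℝ) * (G + ((n : ℝ) - 1) * f i θ + f j θ) * deriv (f j) θ else 0)
          = (n : ℝ) * (G + ((n : ℝ) - 1) * f i θ + f j θ) * deriv (f j) θ
            - (if i = j then (n : ℝ) * (G + ((n : ℝ) - 1) * f i θ + f j θ) * deriv (f j) θ else 0) := by
        intro j; by_cases h : i = j <;> simp [h]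
      simp_rw [this, Finset.sum_sub_distrib, Finset.sum_ite_eq, Finset.mem_univ, if_true]
    simp_rw [key]
    have expand : ∀ i j : Fin n,
        (n : ℝ) * (G + ((n : ℝ) - 1) * f i θ + f j θ) * deriv (f j) θ
        = (n : ℝ) * G * deriv (f j) θ + (n : ℝ) * ((n : ℝ) - 1) * (f i θ * deriv (f j) θ)
          + (n : ℝ) * (f j θ * deriv (f j) θ) := fun i j => by ring
    simp only [expand, Finset.sum_add_distrib, Finset.sum_sub_distrib, ← Finset.mul_sum,
      Finset.sum_const, Finset.card_univ, Fintype.card_fin, nsmul_eq_mul]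
    have hfd : ∑ i, f i θ * D = S * D := by rw [← Finset.sum_mul]
    rw [hfd, ← hDdef]
    ring
  rw [h1, h2]
  field_simp
end

section
/- In the continuous setting, for twice continuously differentiable log-densities, the expected single-coordinate Δ-AI objective satisfies E_{x∼p} E_i (log p(x + h e_i) − log p(x) − log q(x + h e_i) + log q(x))^2 = (h²/d)·E_{x∼p} ‖∇ log p(x) − ∇ log q(x)‖² + O(h³) as h → 0, where E_i is the uniform average over coordinates i ∈ {1,...,d}. -/
/-!
Write `f = log p - log q` and `eᵢ` for the coordinate vectors. A second-order Taylor bound gives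
`f (x + h eᵢ) - f x = h ∂ᵢf x + O(h²)` uniformly in `x`, so each squared increment is
`h² (∂ᵢf x)² + O(|h|³ (1 + (∂ᵢf x)²))`. The error is dominated by `|h|³` times an integrable
function, hence integrating against `p` costs only `O(|h|³)`.
-/

open MeasureTheory Asymptotics Filter Topology

section Taylor

variable {E F : Type*} [NormedAddCommGroup E] [NormedSpace ℝ E] [NormedAddCommGroup F]
  [NormedSpace ℝ F] {f : E → F} {M : ℝ}

theorem norm_fderiv_sub_fderiv_le_of_norm_iteratedFDeriv_two_le (hf : ContDiff ℝ 2 f)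
    (hM : ∀ x, ‖iteratedFDeriv ℝ 2 f x‖ ≤ M) (x y : E) :
    ‖fderiv ℝ f y - fderiv ℝ f x‖ ≤ M * ‖y - x‖ := by
  have hf' : Differentiable ℝ (fderiv ℝ f) :=
    (hf.fderiv_right (m := 1) le_rfl).differentiable one_ne_zero
  refine convex_univ.norm_image_sub_le_of_norm_fderiv_le (fun z _ => hf' z) (fun z _ => ?_)
    (Set.mem_univ x) (Set.mem_univ y)
  rw [← norm_iteratedFDeriv_one, norm_iteratedFDeriv_fderiv]
  exact hM z

theorem norm_sub_sub_fderiv_le_of_norm_iteratedFDeriv_two_le (hf : ContDiff ℝ 2 f)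
    (hM : ∀ x, ‖iteratedFDeriv ℝ 2 f x‖ ≤ M) (x v : E) :
    ‖f (x + v) - f x - fderiv ℝ f x v‖ ≤ M * ‖v‖ ^ 2 := by
  have hball : x + v ∈ Metric.closedBall x ‖v‖ := by simp
  have h := (convex_closedBall x ‖v‖).norm_image_sub_le_of_norm_fderiv_le'
    (φ := fderiv ℝ f x) (C := M * ‖v‖) (fun z _ => hf.differentiable two_ne_zero z) (fun z hz => ?_)
    (Metric.mem_closedBall_self (norm_nonneg v)) hball
  · simpa [sq, mul_assoc] using h
  · refine (norm_fderiv_sub_fderiv_le_of_norm_iteratedFDeriv_two_le hf hM x z).trans ?_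
    have hM0 : 0 ≤ M := (norm_nonneg _).trans (hM x)
    exact mul_le_mul_of_nonneg_left (by simpa [dist_eq_norm] using hz) hM0

end Taylor

theorem abs_sq_sub_sq_le_of_abs_sub_le {a b r : ℝ} (h : |a - b| ≤ r) :
    |a ^ 2 - b ^ 2| ≤ r * (r + 2 * |b|) := by
  have hsum : |a + b| ≤ r + 2 * |b| := by
    calc |a + b| = |(a - b) + 2 * b| := by ring_nf
      _ ≤ |a - b| + 2 * |b| := (abs_add_le _ _).trans_eq (by rw [abs_mul, abs_two])
      _ ≤ r + 2 * |b| := by linarith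
  calc |a ^ 2 - b ^ 2| = |a - b| * |a + b| := by rw [← abs_mul]; ring_nf
    _ ≤ r * (r + 2 * |b|) := mul_le_mul h hsum (abs_nonneg _) ((abs_nonneg _).trans h)

theorem abs_sq_increment_sub_sq_fderiv_le {E : Type*} [NormedAddCommGroup E] [NormedSpace ℝ E]
    {f : E → ℝ} {M : ℝ} (hf : ContDiff ℝ 2 f) (hM : ∀ x, ‖iteratedFDeriv ℝ 2 f x‖ ≤ M)
    (x : E) {v : E} (hv : ‖v‖ = 1) {h : ℝ} (hh : |h| ≤ 1) :
    |(f (x + h • v) - f x) ^ 2 - h ^ 2 * fderiv ℝ f x v ^ 2|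
      ≤ |h| ^ 3 * (M ^ 2 + M + M * fderiv ℝ f x v ^ 2) := by
  set s := fderiv ℝ f x v
  have hM0 : 0 ≤ M := (norm_nonneg _).trans (hM x)
  have hT := norm_sub_sub_fderiv_le_of_norm_iteratedFDeriv_two_le hf hM x (h • v)
  rw [norm_smul, hv, mul_one, map_smul, smul_eq_mul, Real.norm_eq_abs, Real.norm_eq_abs,
    sq_abs] at hT
  have hsq := abs_sq_sub_sq_le_of_abs_sub_le hT
  rw [mul_pow, abs_mul] at hsq
  have h4 : h ^ 4 ≤ |h| ^ 3 := by
    rw [← (by decide : Even 4).pow_abs, pow_succ]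
    exact mul_le_of_le_one_right (by positivity) hh
  have hs : 2 * |s| ≤ 1 + s ^ 2 := by nlinarith [sq_nonneg (|s| - 1), sq_abs s]
  have h3 : h ^ 2 * |h| = |h| ^ 3 := by rw [← sq_abs, ← pow_succ]
  calc |(f (x + h • v) - f x) ^ 2 - h ^ 2 * s ^ 2|
      ≤ M ^ 2 * h ^ 4 + M * (h ^ 2 * |h|) * (2 * |s|) := by linarith
    _ ≤ M ^ 2 * |h| ^ 3 + M * |h| ^ 3 * (1 + s ^ 2) := by
      rw [h3]
      exact add_le_add (mul_le_mul_of_nonneg_left h4 (sq_nonneg M))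
        (mul_le_mul_of_nonneg_left hs (mul_nonneg hM0 (by positivity)))
    _ = |h| ^ 3 * (M ^ 2 + M + M * s ^ 2) := by ring

theorem isBigO_integral_of_norm_le {ι α E : Type*} [MeasurableSpace α] [NormedAddCommGroup E]
    [NormedSpace ℝ E] {μ : Measure α} {l : Filter ι} {F : ι → α → E} {g : ι → ℝ} {G : α → ℝ}
    (hG : Integrable G μ) (hF : ∀ᶠ t in l, ∀ x, ‖F t x‖ ≤ ‖g t‖ * G x) :
    (fun t => ∫ x, F t x ∂μ) =O[l] g := by
  refine isBigO_iff.2 ⟨∫ x, G x ∂μ, hF.mono fun t ht => ?_⟩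
  calc ‖∫ x, F t x ∂μ‖ ≤ ∫ x, ‖g t‖ * G x ∂μ :=
        norm_integral_le_of_norm_le (hG.const_mul _) (ae_of_all _ ht)
    _ = (∫ x, G x ∂μ) * ‖g t‖ := by rw [integral_const_mul, mul_comm]

theorem isBigO_integral_avg_sq_increment_sub_sq_fderiv {d : ℕ} {f : (Fin d → ℝ) → ℝ} {M : ℝ}
    (hf : ContDiff ℝ 2 f) (hM : ∀ x, ‖iteratedFDeriv ℝ 2 f x‖ ≤ M)
    (μ : Measure (Fin d → ℝ)) [IsFiniteMeasure μ]
    (hint : ∀ h : ℝ, Integrable (fun x =>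
      ∑ i, (f (x + h • (Pi.single i 1 : Fin d → ℝ)) - f x) ^ 2) μ)
    (hint2 : Integrable (fun x => ∑ i, fderiv ℝ f x (Pi.single i 1) ^ 2) μ) :
    (fun h : ℝ =>
      (∫ x, (1 / (d : ℝ)) * ∑ i, (f (x + h • (Pi.single i 1 : Fin d → ℝ)) - f x) ^ 2 ∂μ)
        - h ^ 2 / (d : ℝ) * ∫ x, ∑ i, fderiv ℝ f x (Pi.single i 1) ^ 2 ∂μ)
    =O[𝓝 0] (fun h => |h| ^ 3) := by
  set s : (Fin d → ℝ) → Fin d → ℝ := fun x i => fderiv ℝ f x (Pi.single i 1)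
  have hcombine : ∀ h : ℝ,
      (∫ x, (1 / (d : ℝ)) * ∑ i, (f (x + h • (Pi.single i 1 : Fin d → ℝ)) - f x) ^ 2 ∂μ)
        - h ^ 2 / (d : ℝ) * ∫ x, ∑ i, s x i ^ 2 ∂μ
      = ∫ x, (1 / (d : ℝ)) *
          ∑ i, ((f (x + h • (Pi.single i 1 : Fin d → ℝ)) - f x) ^ 2 - h ^ 2 * s x i ^ 2) ∂μ := by
    intro h
    rw [← integral_const_mul, ← integral_sub ((hint h).const_mul _) (hint2.const_mul _)]
    congr 1 with x
    rw [Finset.sum_sub_distrib, ← Finset.mul_sum]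
    ring
  refine (isBigO_integral_of_norm_le
    (G := fun x => (1 / (d : ℝ)) * ∑ i, (M ^ 2 + M + M * s x i ^ 2)) ?_ ?_).congr_left
      fun h => (hcombine h).symm
  · have hG : (fun x => ∑ i, (M ^ 2 + M + M * s x i ^ 2))
        = fun x => d * (M ^ 2 + M) + M * ∑ i, s x i ^ 2 := by
      ext x
      rw [Finset.sum_add_distrib, Finset.sum_const, Finset.card_fin, nsmul_eq_mul, Finset.mul_sum]
    refine Integrable.const_mul ?_ _
    rw [hG]
    exact (integrable_const _).add (hint2.const_mul M)
  · filter_upwards [Metric.closedBall_mem_nhds (0 : ℝ) one_pos] with h hh x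
    have hh' : |h| ≤ 1 := by simpa using hh
    rw [norm_mul, Real.norm_of_nonneg (by positivity), Real.norm_eq_abs, norm_pow,
      Real.norm_eq_abs, abs_abs]
    refine (mul_le_mul_of_nonneg_left ((Finset.abs_sum_le_sum_abs _ _).trans
      (Finset.sum_le_sum fun i _ => abs_sq_increment_sub_sq_fderiv_le hf hM x
        (v := Pi.single i 1) (by rw [Pi.norm_single, norm_one]) hh'))
      (by positivity)).trans_eq ?_
    rw [← Finset.mul_sum]
    ring

theorem stmt_12_general {d : ℕ}
    (lp lq : (Fin d → ℝ) → ℝ)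
    (hlp : ContDiff ℝ 2 lp) (hlq : ContDiff ℝ 2 lq)
    (Mp Mq : ℝ)
    (hMp : ∀ x, ‖iteratedFDeriv ℝ 2 lp x‖ ≤ Mp)
    (hMq : ∀ x, ‖iteratedFDeriv ℝ 2 lq x‖ ≤ Mq)
    (μ : Measure (Fin d → ℝ))
    (hprob : IsProbabilityMeasure μ)
    (hint : ∀ h : ℝ, Integrable (fun x =>
      ∑ i, (lp (x + h • (Pi.single i 1 : Fin d → ℝ)) - lp x -
            (lq (x + h • (Pi.single i 1 : Fin d → ℝ)) - lq x)) ^ 2) μ)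
    (hint2 : Integrable (fun x =>
      ∑ i, (fderiv ℝ lp x ((Pi.single i 1 : Fin d → ℝ)) - fderiv ℝ lq x ((Pi.single i 1 : Fin d → ℝ))) ^ 2) μ) :
    (fun h : ℝ =>
      (∫ x, (1 / (d : ℝ)) *
          ∑ i, (lp (x + h • (Pi.single i 1 : Fin d → ℝ)) - lp x -
                (lq (x + h • (Pi.single i 1 : Fin d → ℝ)) - lq x)) ^ 2 ∂μ)
      - h ^ 2 / (d : ℝ) *
          ∫ x, ∑ i, (fderiv ℝ lp x ((Pi.single i 1 : Fin d → ℝ)) - fderiv ℝ lq x ((Pi.single i 1 : Fin d → ℝ))) ^ 2 ∂μ)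
    =O[nhds 0] (fun h => |h| ^ 3) := by
  have hM : ∀ x, ‖iteratedFDeriv ℝ 2 (lp - lq) x‖ ≤ Mp + Mq := fun x => by
    rw [iteratedFDeriv_sub_apply hlp.contDiffAt hlq.contDiffAt]
    exact (norm_sub_le _ _).trans (add_le_add (hMp x) (hMq x))
  have hincrement :
      ∀ x v, lp (x + v) - lp x - (lq (x + v) - lq x) = (lp - lq) (x + v) - (lp - lq) x :=
    fun _ _ => sub_sub_sub_comm _ _ _ _
  have hfderiv : ∀ x v, fderiv ℝ lp x v - fderiv ℝ lq x v = fderiv ℝ (lp - lq) x v := fun x v => by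
    rw [fderiv_sub (hlp.differentiable two_ne_zero x) (hlq.differentiable two_ne_zero x)]
    rfl
  simp only [hincrement, hfderiv] at hint hint2 ⊢
  exact isBigO_integral_avg_sq_increment_sub_sq_fderiv (hlp.sub hlq) hM μ hint hint2

/-- Continuous Δ-AI and score matching (Prop. 2): for twice continuously differentiable
log-densities `lp = log p`, `lq = log q` with bounded second derivatives, the expected
single-coordinate Δ-AI objective under `x ∼ p` equals `(h²/d)` times the Fisher divergence
up to an `O(|h|³)` error as `h → 0`. -/
theorem stmt_12 {d : ℕ} (hd : 0 < d)
    (lp lq : (Fin d → ℝ) → ℝ)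
    (hlp : ContDiff ℝ 2 lp) (hlq : ContDiff ℝ 2 lq)
    (Mp Mq : ℝ)
    (hMp : ∀ x, ‖iteratedFDeriv ℝ 2 lp x‖ ≤ Mp)
    (hMq : ∀ x, ‖iteratedFDeriv ℝ 2 lq x‖ ≤ Mq)
    (μ : Measure (Fin d → ℝ))
    (hμ : μ = volume.withDensity (fun x => ENNReal.ofReal (Real.exp (lp x))))
    (hprob : IsProbabilityMeasure μ)
    (hint : ∀ h : ℝ, Integrable (fun x =>
      ∑ i, (lp (x + h • (Pi.single i 1 : Fin d → ℝ)) - lp x -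
            (lq (x + h • (Pi.single i 1 : Fin d → ℝ)) - lq x)) ^ 2) μ)
    (hint2 : Integrable (fun x =>
      ∑ i, (fderiv ℝ lp x ((Pi.single i 1 : Fin d → ℝ)) - fderiv ℝ lq x ((Pi.single i 1 : Fin d → ℝ))) ^ 2) μ) :
    (fun h : ℝ =>
      (∫ x, (1 / (d : ℝ)) *
          ∑ i, (lp (x + h • (Pi.single i 1 : Fin d → ℝ)) - lp x -
                (lq (x + h • (Pi.single i 1 : Fin d → ℝ)) - lq x)) ^ 2 ∂μ)
      - h ^ 2 / (d : ℝ) *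
          ∫ x, ∑ i, (fderiv ℝ lp x ((Pi.single i 1 : Fin d → ℝ)) - fderiv ℝ lq x ((Pi.single i 1 : Fin d → ℝ))) ^ 2 ∂μ)
    =O[nhds 0] (fun h => |h| ^ 3) :=
  stmt_12_general lp lq hlp hlq Mp Mq hMp hMq μ hprob hint hint2
end

section
/- If the Δ-AI loss L_Δ(x, u, x'_u) = [∑_{k: u∈S_k} log(φ_k(x_{S_k})/φ_k(x'_{S_k})) − ∑_{v∈{u}∪Ch(u)} log(q(x_v|x_{Pa(v)})/q(x'_v|x'_{Pa(v)}))]² equals zero for all x ∈ {0,1}^V, all u ∈ V, and all values x'_u ≠ x_u, then q = p where p(x) ∝ ∏_k φ_k(x_{S_k}). -/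
/-!
Vanishing of the loss at `(x, u, b)` says exactly that the ratio `q x / ∏ₖ φₖ x` is unchanged
by resetting the single coordinate `u` to `b`: factors not containing `u`, and conditionals of
variables outside `{u} ∪ Ch(u)`, take the same value at both configurations, so the restricted
sums of log-ratios are the full log-ratios of the two products. Any two configurations are joined
by single-coordinate changes, so `q` is a constant multiple of `∏ₖ φₖ`, and the constant is
`1 / Z` because a locally normalized Bayesian network sums to one.
-/

open Finset Function

lemma apply_eq_of_forall_apply_update_eq {ι β : Type*} {α : ι → Type*} [Fintype ι]
    [DecidableEq ι] (f : (∀ i, α i) → β) (hf : ∀ x i a, f (update x i a) = f x)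
    (x y : ∀ i, α i) : f y = f x := by
  have key : ∀ s : Finset ι, f (s.piecewise y x) = f x := by
    intro s
    induction s using Finset.induction_on with
    | empty => simp
    | insert i s _ ih => rw [piecewise_insert, hf, ih]
  simpa using key univ

lemma sum_log_div_eq_log_prod_div {ι : Type*} [Fintype ι] (s : Finset ι) {f g : ι → ℝ}
    (hf : ∀ i, 0 < f i) (hg : ∀ i, 0 < g i) (hfg : ∀ i ∉ s, f i = g i) :
    ∑ i ∈ s, Real.log (f i / g i) = Real.log ((∏ i, f i) / ∏ i, g i) := by
  rw [← prod_div_distrib, Real.log_prod fun i _ => (div_pos (hf i) (hg i)).ne']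
  refine sum_subset (subset_univ s) fun i _ hi => ?_
  rw [hfg i hi, div_self (hg i).ne', Real.log_one]

lemma exists_sink_of_acyclic {V : Type*} [Finite V] {A : V → V → Prop}
    (hacyc : ∀ v, ¬ Relation.TransGen A v v) {T : Finset V} (hT : T.Nonempty) :
    ∃ m ∈ T, ∀ v ∈ T, ¬ A m v := by
  have : IsTrans V (flip (Relation.TransGen A)) := ⟨fun _ _ _ h₁ h₂ => h₂.trans h₁⟩
  have : Std.Irrefl (flip (Relation.TransGen A)) := ⟨hacyc⟩
  obtain ⟨m, hm, hmin⟩ :=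
    (Finite.wellFounded_of_trans_of_irrefl (flip (Relation.TransGen A))).has_min
      (T : Set V) (coe_nonempty.2 hT)
  exact ⟨m, hm, fun v hv hA => hmin v hv (.single hA)⟩

section BayesNet

variable {V : Type*} [Fintype V] [DecidableEq V] {A : V → V → Prop}
  {c : V → (V → Bool) → Bool → ℝ}

lemma two_mul_sum_prod_cond_eq_sum_prod_erase
    (hcloc : ∀ v x y b, (∀ w, A w v → x w = y w) → c v x b = c v y b)
    (hcnorm : ∀ v x, c v x true + c v x false = 1)
    {T : Finset V} {m : V} (hm : m ∈ T) (hsink : ∀ v ∈ T, ¬ A m v) :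
    2 * ∑ σ : V → Bool, ∏ v ∈ T, c v σ (σ v)
      = ∑ σ : V → Bool, ∏ v ∈ T.erase m, c v σ (σ v) := by
  set w : (V → Bool) → ℝ := fun σ => ∏ v ∈ T.erase m, c v σ (σ v)
  have hparents : ∀ v ∈ T, ∀ σ b, c v (update σ m b) = c v σ := fun v hv σ b =>
    funext fun b' => hcloc v _ _ b' fun w hw =>
      update_of_ne (fun (h : w = m) => hsink v hv (h ▸ hw)) _ _
  have hw : ∀ σ b, w (update σ m b) = w σ := fun σ b =>
    prod_congr rfl fun v hv => by
      rw [hparents v (mem_of_mem_erase hv), update_of_ne (ne_of_mem_erase hv)]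
  have hflip : Involutive fun σ : V → Bool => update σ m (!σ m) := fun σ => by simp
  -- Flipping `σ m` changes neither `w σ` nor the parents of `m`, as `m` is a sink of `T`.
  have hsum_flip :
      ∑ σ : V → Bool, c m σ (σ m) * w σ = ∑ σ : V → Bool, c m σ (!σ m) * w σ := by
    rw [← Equiv.sum_comp (hflip.toPerm _)]
    simp [hparents m hm, hw]
  have hnorm : ∀ σ : V → Bool, c m σ (σ m) + c m σ (!σ m) = 1 := fun σ => by
    cases σ m
    · rw [add_comm]; exact hcnorm m σ
    · exact hcnorm m σ
  calc 2 * ∑ σ : V → Bool, ∏ v ∈ T, c v σ (σ v)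
      = ∑ σ : V → Bool, c m σ (σ m) * w σ + ∑ σ : V → Bool, c m σ (!σ m) * w σ := by
        simp only [w, ← mul_prod_erase T _ hm, two_mul, hsum_flip]
    _ = ∑ σ : V → Bool, w σ := by
        rw [← sum_add_distrib]
        simp only [← add_mul, hnorm, one_mul]

lemma two_pow_card_mul_sum_prod_cond (hacyc : ∀ v, ¬ Relation.TransGen A v v)
    (hcloc : ∀ v x y b, (∀ w, A w v → x w = y w) → c v x b = c v y b)
    (hcnorm : ∀ v x, c v x true + c v x false = 1) (T : Finset V) :
    2 ^ T.card * ∑ σ : V → Bool, ∏ v ∈ T, c v σ (σ v) = 2 ^ Fintype.card V := by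
  induction T using Finset.strongInduction with
  | _ T ih =>
    rcases T.eq_empty_or_nonempty with rfl | hT
    · simp
    obtain ⟨m, hm, hsink⟩ := exists_sink_of_acyclic hacyc hT
    rw [← card_erase_add_one hm, pow_succ, mul_assoc,
      two_mul_sum_prod_cond_eq_sum_prod_erase hcloc hcnorm hm hsink,
      ih _ (erase_ssubset hm)]

lemma sum_prod_cond_eq_one (hacyc : ∀ v, ¬ Relation.TransGen A v v)
    (hcloc : ∀ v x y b, (∀ w, A w v → x w = y w) → c v x b = c v y b)
    (hcnorm : ∀ v x, c v x true + c v x false = 1) :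
    ∑ σ : V → Bool, ∏ v, c v σ (σ v) = 1 := by
  have h := two_pow_card_mul_sum_prod_cond hacyc hcloc hcnorm univ
  rwa [card_univ, mul_eq_left₀ (by positivity)] at h

end BayesNet

lemma div_prod_update_eq_of_log_ratio_sums_eq {V : Type*} [Fintype V] [DecidableEq V] {K : ℕ}
    {S : Fin K → Finset V} {φ : Fin K → (V → Bool) → ℝ} (hφpos : ∀ k x, 0 < φ k x)
    (hφloc : ∀ k x y, (∀ v ∈ S k, x v = y v) → φ k x = φ k y)
    {A : V → V → Prop} [DecidableRel A] {c : V → (V → Bool) → Bool → ℝ}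
    (hcpos : ∀ v x b, 0 < c v x b)
    (hcloc : ∀ v x y b, (∀ w, A w v → x w = y w) → c v x b = c v y b)
    {x : V → Bool} {u : V} {b : Bool}
    (h : ∑ k ∈ univ.filter (fun k => u ∈ S k), Real.log (φ k x / φ k (update x u b))
      = ∑ v ∈ insert u (univ.filter (fun v => A u v)),
          Real.log (c v x (x v) / c v (update x u b) (update x u b v))) :
    (∏ v, c v (update x u b) (update x u b v)) / ∏ k, φ k (update x u b)
      = (∏ v, c v x (x v)) / ∏ k, φ k x := by
  set x' := update x u b
  have hx' : ∀ v ≠ u, x' v = x v := fun v h => update_of_ne h _ _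
  rw [sum_log_div_eq_log_prod_div _ (hφpos · x) (hφpos · x') fun k hk =>
      hφloc k x x' fun v hv => by rw [hx' v (fun h => hk (by simpa [← h] using hv))],
    sum_log_div_eq_log_prod_div _ (fun v => hcpos v x _) (fun v => hcpos v x' _) fun v hv => by
      simp only [mem_insert, mem_filter, mem_univ, true_and, not_or] at hv
      rw [hx' v hv.1]
      exact hcloc v x x' _ fun w hw => (hx' w fun (h : w = u) => hv.2 (h ▸ hw)).symm] at h
  have hΦpos : ∀ y, 0 < ∏ k, φ k y := fun y => prod_pos fun k _ => hφpos k y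
  have hqpos : ∀ y, 0 < ∏ v, c v y (y v) := fun y => prod_pos fun v _ => hcpos v y (y v)
  have h' := Real.log_injOn_pos (div_pos (hΦpos x) (hΦpos x')) (div_pos (hqpos x) (hqpos x')) h
  rw [div_eq_div_iff (hΦpos x').ne' (hqpos x').ne'] at h'
  rw [div_eq_div_iff (hΦpos x').ne' (hΦpos x).ne']
  linarith

lemma eq_div_sum_of_div_eq_div {α : Type*} [Fintype α] {f g : α → ℝ} (hg : ∀ y, 0 < g y)
    (hf : ∑ y, f y = 1) (hfg : ∀ x y, f y / g y = f x / g x) (x : α) :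
    f x = g x / ∑ y, g y := by
  have hfx : ∀ y, f y = f x / g x * g y := fun y => by
    rw [← hfg x y, div_mul_cancel₀ _ (hg y).ne']
  have hsum : f x / g x * ∑ y, g y = 1 := by
    rw [mul_sum, ← hf]
    exact sum_congr rfl fun y _ => (hfx y).symm
  have hsum_ne : ∑ y, g y ≠ 0 := by rintro h; simp [h] at hsum
  field_simp [(hg x).ne'] at hsum
  rw [eq_div_iff hsum_ne, hsum]

/-- If the Δ-AI squared log-ratio loss vanishes for every configuration `x`, perturbed
variable `u`, and new value `b ≠ x u`, then the Bayesian network `q` equals the normalized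
factorized model `p`. -/
theorem stmt_14 {V : Type*} [Fintype V] [DecidableEq V] {K : ℕ}
    (S : Fin K → Finset V) (φ : Fin K → (V → Bool) → ℝ)
    (hφpos : ∀ k x, 0 < φ k x)
    (hφloc : ∀ k x y, (∀ v ∈ S k, x v = y v) → φ k x = φ k y)
    (Z : ℝ) (hZ : Z = ∑ x : V → Bool, ∏ k, φ k x)
    (p : (V → Bool) → ℝ) (hpdef : ∀ x, p x = (∏ k, φ k x) / Z)
    (A : V → V → Prop) [DecidableRel A]
    (hacyc : ∀ v, ¬ Relation.TransGen A v v)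
    (c : V → (V → Bool) → Bool → ℝ)
    (hcpos : ∀ v x b, 0 < c v x b)
    (hcloc : ∀ v x y b, (∀ w, A w v → x w = y w) → c v x b = c v y b)
    (hcnorm : ∀ v x, c v x true + c v x false = 1)
    (q : (V → Bool) → ℝ) (hqdef : ∀ x, q x = ∏ v, c v x (x v))
    (hloss : ∀ (x : V → Bool) (u : V) (b : Bool), b ≠ x u →
      ((∑ k ∈ Finset.univ.filter (fun k => u ∈ S k),
          Real.log (φ k x / φ k (Function.update x u b)))
       - ∑ v ∈ insert u (Finset.univ.filter (fun v => A u v)),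
          Real.log (c v x (x v) / c v (Function.update x u b) (Function.update x u b v))) ^ 2
        = 0) :
    q = p := by
  have hratio : ∀ x u b, q (update x u b) / ∏ k, φ k (update x u b) = q x / ∏ k, φ k x := by
    intro x u b
    by_cases hb : b = x u
    · rw [hb, update_eq_self]
    rw [hqdef, hqdef]
    refine div_prod_update_eq_of_log_ratio_sums_eq hφpos hφloc hcpos hcloc ?_
    exact sub_eq_zero.1 (pow_eq_zero_iff two_ne_zero |>.1 (hloss x u b hb))
  have hsum : ∑ y, q y = 1 := by
    simpa only [hqdef] using sum_prod_cond_eq_one hacyc hcloc hcnorm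
  funext x
  rw [hpdef, hZ]
  exact eq_div_sum_of_div_eq_div (fun y => prod_pos fun k _ => hφpos k y) hsum
    (apply_eq_of_forall_apply_update_eq (fun x => q x / ∏ k, φ k x) hratio) x
end
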